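/- arXiv:2511.10530 — 7 statements merged into one kernel-verified Lean document; each statement's English description precedes it below -/
import Mathlib

section
/- With respect to the real inner product on ℂ² given by ⟨(z₁,z₂),(w₁,w₂)⟩ = Re(z₁·conj(w₁)) + Re(z₂·conj(w₂)), the Gram matrix of the four vectors v₁ = (1,1), v₂ = (ζ,ζ²), v₃ = (ζ²,ζ⁴), v₄ = (ζ³,ζ) is G = (1/2)·M, where M is the 4×4 matrix with every diagonal entry 4 and every off-diagonal entry −1; that is, ⟨vᵢ,vᵢ⟩ = 2 for each i and ⟨vᵢ,vⱼ⟩ = −1/2 for all i ≠ j. -/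
/-! Since `ζ⁶ = ζ`, the vectors are `vₖ = (ζᵏ, ζ²ᵏ)`, and as `conj ζ = ζ⁴ = ζ⁻¹` we get
`⟨vᵢ, vⱼ⟩ = Re (μ + μ²)` with `μ = ζ^(i-j)`. For `i = j` this is `2`; otherwise `μ` is a
fifth root of unity other than `1`, and `Re (μ + μ²) = -1/2`. -/

noncomputable section

/-- The primitive fifth root of unity `ζ = exp(2πi/5)`. -/
def ζ : ℂ := Complex.exp (2 * Real.pi * Complex.I / 5)

/-- The four vectors `v₁ = (1,1)`, `v₂ = (ζ,ζ²)`, `v₃ = (ζ²,ζ⁴)`, `v₄ = (ζ³,ζ)` in `ℂ²`. -/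
def v : Fin 4 → ℂ × ℂ := ![(1, 1), (ζ, ζ ^ 2), (ζ ^ 2, ζ ^ 4), (ζ ^ 3, ζ)]

/-- The real inner product on `ℂ²`:
`⟨(z₁,z₂),(w₁,w₂)⟩ = Re(z₁·conj(w₁)) + Re(z₂·conj(w₂))`. -/
def ip (z w : ℂ × ℂ) : ℝ :=
  (z.1 * (starRingEnd ℂ) w.1).re + (z.2 * (starRingEnd ℂ) w.2).re

open ComplexConjugate

lemma isPrimitiveRoot_ζ : IsPrimitiveRoot ζ 5 := by
  simpa [ζ] using Complex.isPrimitiveRoot_exp 5 (by norm_num)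

lemma conj_eq_pow_of_pow_succ_eq_one {μ : ℂ} {n : ℕ} (hμ : μ ^ (n + 1) = 1) :
    conj μ = μ ^ n := by
  rw [← RCLike.inv_eq_conj (Complex.norm_eq_one_of_pow_eq_one hμ n.succ_ne_zero)]
  exact inv_eq_of_mul_eq_one_right (by rw [← pow_succ', hμ])

/-- Since `conj μ = μ⁻¹`, the real parts of `μ, μ²` repeat as those of `μ⁴, μ³`, so
`2 Re (μ + μ²)` is the real part of `μ + μ² + μ³ + μ⁴ = -1`. -/
lemma re_add_sq_of_pow_five_eq_one {μ : ℂ} (h5 : μ ^ 5 = 1) (h1 : μ ≠ 1) :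
    (μ + μ ^ 2).re = -1 / 2 := by
  have hconj : conj μ = μ ^ 4 := conj_eq_pow_of_pow_succ_eq_one h5
  have hre1 : (μ ^ 4).re = μ.re := by rw [← hconj, Complex.conj_re]
  have hre2 : (μ ^ 3).re = (μ ^ 2).re := by
    rw [← Complex.conj_re (μ ^ 2), map_pow, hconj]
    congr 1
    linear_combination -μ ^ 3 * h5
  have hsum : 1 + μ + μ ^ 2 + μ ^ 3 + μ ^ 4 = 0 := by
    have : (μ - 1) * (1 + μ + μ ^ 2 + μ ^ 3 + μ ^ 4) = 0 := by linear_combination h5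
    exact (mul_eq_zero.1 this).resolve_left (sub_ne_zero.2 h1)
  have hsum_re := congrArg Complex.re hsum
  simp only [Complex.add_re, Complex.one_re, Complex.zero_re] at hsum_re ⊢
  linarith

lemma ip_pow_pow {z : ℂ} {k : ℕ} (hz : conj z = z ^ k) (a b : ℕ) :
    ip (z ^ a, z ^ (2 * a)) (z ^ b, z ^ (2 * b)) =
      (z ^ (a + k * b) + (z ^ (a + k * b)) ^ 2).re := by
  simp only [ip, map_pow, hz, ← Complex.add_re]
  ring_nf

lemma v_eq_pow (i : Fin 4) : v i = (ζ ^ (i : ℕ), ζ ^ (2 * i : ℕ)) := by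
  have h5 : ζ ^ 5 = 1 := isPrimitiveRoot_ζ.pow_eq_one
  fin_cases i <;> simp [v]
  linear_combination -ζ * h5

lemma ip_v (i j : Fin 4) :
    ip (v i) (v j) = (ζ ^ (i + 4 * j : ℕ) + (ζ ^ (i + 4 * j : ℕ)) ^ 2).re := by
  rw [v_eq_pow, v_eq_pow,
    ip_pow_pow (conj_eq_pow_of_pow_succ_eq_one isPrimitiveRoot_ζ.pow_eq_one)]

/-- The Gram matrix of `v₁, v₂, v₃, v₄` is `(1/2)·M` where `M` has diagonal entries `4` and
off-diagonal entries `-1`: `⟨vᵢ,vᵢ⟩ = 2` and `⟨vᵢ,vⱼ⟩ = -1/2` for `i ≠ j`. -/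
theorem gram_matrix_of_basis :
    (∀ i : Fin 4, ip (v i) (v i) = 2) ∧
    (∀ i j : Fin 4, i ≠ j → ip (v i) (v j) = -1 / 2) := by
  constructor
  · intro i
    have h1 : ζ ^ (i + 4 * i : ℕ) = 1 :=
      (isPrimitiveRoot_ζ.pow_eq_one_iff_dvd _).2 ⟨i, by ring⟩
    rw [ip_v, h1]
    norm_num
  · intro i j hij
    have hne : ζ ^ (i + 4 * j : ℕ) ≠ 1 := by
      rw [Ne, isPrimitiveRoot_ζ.pow_eq_one_iff_dvd]
      have := Fin.val_ne_of_ne hij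
      omega
    rw [ip_v]
    exact re_add_sq_of_pow_five_eq_one
      (by rw [pow_right_comm, isPrimitiveRoot_ζ.pow_eq_one, one_pow]) hne

end
end

section
/- The ℝ-linear map φ of ℂ² defined by φ(z,w) = (λz, −λ⁻¹w), where λ = (1+√5)/2, maps Λ bijectively onto itself: φ(Λ) = Λ. -/
noncomputable section

/-- The lattice `Λ ⊆ ℂ²` generated by `(1,1)`, `(ζ,ζ²)`, `(ζ²,ζ⁴)`, `(ζ³,ζ)`. -/
def Λ : AddSubgroup (ℂ × ℂ) :=
  AddSubgroup.closure {((1 : ℂ), (1 : ℂ)), (ζ, ζ ^ 2), (ζ ^ 2, ζ ^ 4), (ζ ^ 3, ζ)}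

/-- The golden ratio `λ = (1+√5)/2`, as a complex number. -/
def gold : ℂ := (((1 + Real.sqrt 5) / 2 : ℝ) : ℂ)

/-- The `ℝ`-linear map `φ(z,w) = (λz, −λ⁻¹w)` of `ℂ²`. -/
def φ (p : ℂ × ℂ) : ℂ × ℂ := (gold * p.1, -gold⁻¹ * p.2)

lemma zeta_pow (k : ℕ) : ζ ^ k = Complex.exp ((↑(2 * Real.pi * k / 5) : ℂ) * Complex.I) := by
  rw [ζ, ← Complex.exp_nat_mul]
  congr 1
  push_cast
  ring

lemma zeta_pow_five : ζ ^ 5 = 1 := by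
  rw [zeta_pow]
  have : ((2 * Real.pi * (5:ℕ) / 5 : ℝ) : ℂ) * Complex.I = 2 * Real.pi * Complex.I := by
    push_cast; ring
  rw [this, Complex.exp_two_pi_mul_I]

lemma zeta_ne_one : ζ ≠ 1 := by
  intro h
  have him : ζ.im = Real.sin (2 * Real.pi / 5) := by
    rw [ζ]
    have : (2 * Real.pi * Complex.I / 5 : ℂ) = (↑(2 * Real.pi / 5) : ℝ) * Complex.I := by
      push_cast; ring
    rw [this, Complex.exp_ofReal_mul_I_im]
  have hpos : 0 < Real.sin (2 * Real.pi / 5) := by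
    apply Real.sin_pos_of_pos_of_lt_pi
    · positivity
    · nlinarith [Real.pi_pos]
  rw [h] at him
  simp at him
  linarith [him ▸ hpos]

lemma zeta_sum : 1 + ζ + ζ ^ 2 + ζ ^ 3 + ζ ^ 4 = 0 := by
  have h5 := zeta_pow_five
  have hne : ζ - 1 ≠ 0 := sub_ne_zero.mpr zeta_ne_one
  have : (ζ - 1) * (1 + ζ + ζ ^ 2 + ζ ^ 3 + ζ ^ 4) = 0 := by linear_combination h5
  rcases mul_eq_zero.mp this with h | h
  · exact absurd h hne
  · exact h

lemma gold_eq : gold = -(ζ ^ 2 + ζ ^ 3) := by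
  have h2 : ζ ^ 2 = Complex.exp ((↑(Real.pi - Real.pi / 5) : ℂ) * Complex.I) := by
    rw [zeta_pow 2]; congr 2; push_cast; ring
  have h3 : ζ ^ 3 = Complex.exp ((↑(Real.pi + Real.pi / 5) : ℂ) * Complex.I) := by
    rw [zeta_pow 3]; congr 2; push_cast; ring
  rw [h2, h3, Complex.exp_mul_I, Complex.exp_mul_I]
  rw [← Complex.ofReal_cos, ← Complex.ofReal_sin, ← Complex.ofReal_cos, ← Complex.ofReal_sin]
  rw [Real.cos_pi_sub, Real.sin_pi_sub, Real.cos_add, Real.sin_add, Real.cos_pi, Real.sin_pi]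
  rw [Real.cos_pi_div_five]
  rw [gold]
  push_cast
  ring


lemma gold_ne : gold ≠ 0 := by
  rw [gold, Ne, Complex.ofReal_eq_zero]
  positivity

lemma gold_inv : gold⁻¹ = ζ + ζ ^ 4 := by
  have e5 := zeta_pow_five
  have s := zeta_sum
  refine inv_eq_of_mul_eq_one_right ?_
  rw [gold_eq]
  linear_combination (-ζ - ζ ^ 2) * e5 - s

def ψ (p : ℂ × ℂ) : ℂ × ℂ := (gold⁻¹ * p.1, -gold * p.2)

lemma phi_apply (a b : ℂ) : φ (a, b) = (-(ζ ^ 2 + ζ ^ 3) * a, -(ζ + ζ ^ 4) * b) := by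
  show (gold * a, -gold⁻¹ * b) = _
  rw [gold_inv, gold_eq]

lemma psi_apply (a b : ℂ) : ψ (a, b) = ((ζ + ζ ^ 4) * a, (ζ ^ 2 + ζ ^ 3) * b) := by
  show (gold⁻¹ * a, -gold * b) = _
  rw [gold_inv, gold_eq]
  ring_nf

lemma v1_mem : ((1:ℂ), (1:ℂ)) ∈ Λ := AddSubgroup.subset_closure (Or.inl rfl)
lemma v2_mem : (ζ, ζ ^ 2) ∈ Λ := AddSubgroup.subset_closure (Or.inr (Or.inl rfl))
lemma v3_mem : (ζ ^ 2, ζ ^ 4) ∈ Λ := AddSubgroup.subset_closure (Or.inr (Or.inr (Or.inl rfl)))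
lemma v4_mem : (ζ ^ 3, ζ) ∈ Λ := AddSubgroup.subset_closure (Or.inr (Or.inr (Or.inr rfl)))

lemma phi_mem : ∀ p ∈ Λ, φ p ∈ Λ := by
  have e5 := zeta_pow_five
  have s := zeta_sum
  have key : ({((1 : ℂ), (1 : ℂ)), (ζ, ζ ^ 2), (ζ ^ 2, ζ ^ 4), (ζ ^ 3, ζ)} : Set (ℂ × ℂ))
      ⊆ (Λ.comap (AddMonoidHom.mk' φ (by intro a b; simp [φ]; constructor <;> ring)) :
        Set (ℂ × ℂ)) := by
    rintro p (rfl | rfl | rfl | rfl) <;>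
      simp only [AddSubgroup.mem_comap, AddMonoidHom.mk'_apply, SetLike.mem_coe]
    · have h : φ (1, 1) = -((ζ ^ 2, ζ ^ 4) + (ζ ^ 3, ζ)) := by
        rw [phi_apply]
        simp only [Prod.mk_add_mk, Prod.neg_mk, Prod.mk.injEq]
        exact ⟨by ring, by ring⟩
      rw [h]; exact neg_mem (add_mem v3_mem v4_mem)
    · have h : φ (ζ, ζ ^ 2) = ((1:ℂ),(1:ℂ)) + (ζ, ζ ^ 2) + (ζ ^ 2, ζ ^ 4) := by
        rw [phi_apply]
        simp only [Prod.mk_add_mk, Prod.mk.injEq]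
        exact ⟨by linear_combination -s, by linear_combination -ζ * e5 - s⟩
      rw [h]; exact add_mem (add_mem v1_mem v2_mem) v3_mem
    · have h : φ (ζ ^ 2, ζ ^ 4) = (ζ, ζ ^ 2) + (ζ ^ 2, ζ ^ 4) + (ζ ^ 3, ζ) := by
        rw [phi_apply]
        simp only [Prod.mk_add_mk, Prod.mk.injEq]
        exact ⟨by linear_combination -e5 - s, by linear_combination (-1 - ζ ^ 3) * e5 - s⟩
      rw [h]; exact add_mem (add_mem v2_mem v3_mem) v4_mem
    · have h : φ (ζ ^ 3, ζ) = -(((1:ℂ),(1:ℂ)) + (ζ, ζ ^ 2)) := by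
        rw [phi_apply]
        simp only [Prod.mk_add_mk, Prod.neg_mk, Prod.mk.injEq]
        exact ⟨by linear_combination (-1 - ζ) * e5, by linear_combination -e5⟩
      rw [h]; exact neg_mem (add_mem v1_mem v2_mem)
  intro p hp
  exact (AddSubgroup.closure_le _).mpr key hp

lemma psi_mem : ∀ p ∈ Λ, ψ p ∈ Λ := by
  have e5 := zeta_pow_five
  have s := zeta_sum
  have key : ({((1 : ℂ), (1 : ℂ)), (ζ, ζ ^ 2), (ζ ^ 2, ζ ^ 4), (ζ ^ 3, ζ)} : Set (ℂ × ℂ))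
      ⊆ (Λ.comap (AddMonoidHom.mk' ψ (by intro a b; simp [ψ]; constructor <;> ring)) :
        Set (ℂ × ℂ)) := by
    rintro p (rfl | rfl | rfl | rfl) <;>
      simp only [AddSubgroup.mem_comap, AddMonoidHom.mk'_apply, SetLike.mem_coe]
    · have h : ψ (1, 1) = -(((1:ℂ),(1:ℂ)) + (ζ ^ 2, ζ ^ 4) + (ζ ^ 3, ζ)) := by
        rw [psi_apply]
        simp only [Prod.mk_add_mk, Prod.neg_mk, Prod.mk.injEq]
        exact ⟨by linear_combination s, by linear_combination s⟩
      rw [h]; exact neg_mem (add_mem (add_mem v1_mem v3_mem) v4_mem)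
    · have h : ψ (ζ, ζ ^ 2) = ((1:ℂ),(1:ℂ)) + (ζ ^ 2, ζ ^ 4) := by
        rw [psi_apply]
        simp only [Prod.mk_add_mk, Prod.mk.injEq]
        exact ⟨by linear_combination e5, by linear_combination e5⟩
      rw [h]; exact add_mem v1_mem v3_mem
    · have h : ψ (ζ ^ 2, ζ ^ 4) = (ζ, ζ ^ 2) + (ζ ^ 3, ζ) := by
        rw [psi_apply]
        simp only [Prod.mk_add_mk, Prod.mk.injEq]
        exact ⟨by linear_combination ζ * e5, by linear_combination (ζ + ζ ^ 2) * e5⟩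
      rw [h]; exact add_mem v2_mem v4_mem
    · have h : ψ (ζ ^ 3, ζ) = -(((1:ℂ),(1:ℂ)) + (ζ, ζ ^ 2) + (ζ ^ 3, ζ)) := by
        rw [psi_apply]
        simp only [Prod.mk_add_mk, Prod.neg_mk, Prod.mk.injEq]
        exact ⟨by linear_combination ζ ^ 2 * e5 + s, by linear_combination s⟩
      rw [h]; exact neg_mem (add_mem (add_mem v1_mem v2_mem) v4_mem)
  intro p hp
  exact (AddSubgroup.closure_le _).mpr key hp

/-- `φ` maps `Λ` bijectively onto itself: `φ(Λ) = Λ`. -/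
theorem monodromy_preserves_lattice :
    φ '' (Λ : Set (ℂ × ℂ)) = (Λ : Set (ℂ × ℂ)) := by
  apply Set.eq_of_subset_of_subset
  · rintro _ ⟨p, hp, rfl⟩
    exact phi_mem p hp
  · intro p hp
    refine ⟨ψ p, psi_mem p hp, ?_⟩
    have hg := gold_ne
    show (gold * (gold⁻¹ * p.1), -gold⁻¹ * (-gold * p.2)) = p
    rw [Prod.ext_iff]
    constructor
    · simp
      field_simp
    · simp
      field_simp

end
end

section
/- The integer matrix Q with rows (2,−1,−1,1), (−1,2,0,−1), (−1,0,−2,1), (1,−1,1,−2) is symmetric, satisfies det Q = 16, is even (vᵀQv is an even integer for every v ∈ ℤ⁴), and has signature 0: there exists an invertible real 4×4 matrix P with Pᵀ Q P equal to the diagonal matrix diag(1,1,−1,−1). -/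
open Matrix

/-- The intersection form of the fiber `F` on `H₂(F) ≅ ℤ⁴`. -/
def Q : Matrix (Fin 4) (Fin 4) ℤ :=
  !![2, -1, -1, 1;
     -1, 2, 0, -1;
     -1, 0, -2, 1;
     1, -1, 1, -2]

/-- An integer change of basis taking `Q` to `diag(8,8,-8,-8)`. -/
def V : Matrix (Fin 4) (Fin 4) ℤ :=
  !![-4, -2, -4, 0;
     -4, 1, -3, -2;
     -2, -1, -3, 0;
     -2, 0, -2, -2]

lemma V_diag : Vᵀ * Q * V = Matrix.diagonal ![8, 8, -8, -8] := by decide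

lemma V_det : V.det = -16 := by decide

/-- `Q` is symmetric, `det Q = 16`, `Q` is even, and `Q` has signature 0: it is equivalent
over `ℝ` to `diag(1,1,−1,−1)`. -/
theorem intersection_form_properties :
    Qᵀ = Q ∧
    Q.det = 16 ∧
    (∀ v : Fin 4 → ℤ, Even (v ⬝ᵥ (Q *ᵥ v))) ∧
    (∃ P : Matrix (Fin 4) (Fin 4) ℝ, IsUnit P ∧
      Pᵀ * Q.map ((↑) : ℤ → ℝ) * P = Matrix.diagonal ![1, 1, -1, -1]) := by
  refine ⟨?_, ?_, ?_, ?_⟩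
  · decide
  · decide
  · intro v
    refine ⟨v 0 ^ 2 + v 1 ^ 2 - v 2 ^ 2 - v 3 ^ 2 - v 0 * v 1 - v 0 * v 2 + v 0 * v 3
      - v 1 * v 3 + v 2 * v 3, ?_⟩
    simp [Q, dotProduct, Matrix.mulVec, Fin.sum_univ_four]
    ring
  · set c : ℤ →+* ℝ := Int.castRingHom ℝ
    set s : ℝ := (Real.sqrt 8)⁻¹ with hs
    have hs2 : s * s = 1 / 8 := by
      rw [hs, ← mul_inv, Real.mul_self_sqrt (by norm_num : (0:ℝ) ≤ 8)]
      norm_num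
    have hsne : s ≠ 0 := by rw [hs]; positivity
    have hc : ((↑) : ℤ → ℝ) = ⇑c := rfl
    have hdet : (V.map ⇑c).det = c V.det := by
      rw [← RingHom.mapMatrix_apply, ← RingHom.map_det]
    refine ⟨s • V.map c, ?_, ?_⟩
    · rw [Matrix.isUnit_iff_isUnit_det, isUnit_iff_ne_zero, Matrix.det_smul, hdet, V_det]
      simp [hsne]
    · rw [hc, Matrix.transpose_smul, Matrix.smul_mul, Matrix.mul_smul, Matrix.smul_mul,
        smul_smul, hs2, ← Matrix.transpose_map, ← Matrix.map_mul, ← Matrix.map_mul, V_diag,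
        Matrix.diagonal_map (map_zero c)]
      ext i j
      fin_cases i <;> fin_cases j <;> simp [Matrix.diagonal]
end

section
/- Let Q be the 4×4 integer matrix with rows (2,−1,−1,1), (−1,2,0,−1), (−1,0,−2,1), (1,−1,1,−2) and let A be the 4×4 integer matrix with rows (−1,−1,−1,1), (−2,1,0,1), (−1,1,0,1), (0,1,1,0). Then Aᵀ Q A = Q, det A = 1, and the characteristic polynomial of A is X⁴ − 6X² + 1; in particular the eigenvalues of A are ±1±√2. -/
open Matrix Polynomial

/-- The matrix of the action of the monodromy `φ` on `H₂(F) ≅ ℤ⁴`. -/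
def A : Matrix (Fin 4) (Fin 4) ℤ :=
  !![-1, -1, -1, 1;
     -2, 1, 0, 1;
     -1, 1, 0, 1;
     0, 1, 1, 0]

/-! The quartic `X⁴ − 6X² + 1` is `(X² − 2X − 1)(X² + 2X − 1)`, and each quadratic factor splits
over any ring containing a square root of `2`; the real characteristic polynomial of `A` is the
image of the integral one, so it splits in the same way. -/

lemma charmatrix_A : A.charmatrix =
    !![X + 1, 1, 1, -1;
       2, X - 1, 0, -1;
       1, -1, X, -1;
       0, -1, -1, X] := by
  ext i j
  fin_cases i <;> fin_cases j <;> simp [A]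

lemma charpoly_A : A.charpoly = X ^ 4 - 6 * X ^ 2 + 1 := by
  rw [charpoly, charmatrix_A, det_succ_row_zero]
  simp [Fin.sum_univ_succ, det_fin_three, Fin.succAbove]
  ring

lemma det_A : A.det = 1 := by
  rw [det_eq_sign_charpoly_coeff, charpoly_A]
  simp [coeff_X_pow, coeff_one]

lemma X_pow_four_sub_six_mul_X_sq_add_one_eq_prod {R : Type*} [CommRing R] {s : R}
    (hs : s ^ 2 = 2) :
    (X ^ 4 - 6 * X ^ 2 + 1 : R[X]) =
      (X - C (1 + s)) * (X - C (1 - s)) * (X - C (-1 + s)) * (X - C (-1 - s)) := by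
  have hC : C s ^ 2 = 2 := by rw [← map_pow, hs, map_ofNat]
  simp only [map_add, map_sub, map_neg, map_one]
  linear_combination (2 * X ^ 2 - C s ^ 2) * hC

/-- `AᵀQA = Q`, `det A = 1`, and the characteristic polynomial of `A` is `X⁴ − 6X² + 1`;
in particular the eigenvalues of `A` are `±1±√2`. -/
theorem monodromy_H2_properties :
    Aᵀ * Q * A = Q ∧
    A.det = 1 ∧
    A.charpoly = X ^ 4 - 6 * X ^ 2 + 1 ∧
    (A.map ((↑) : ℤ → ℝ)).charpoly =
      (X - C (1 + Real.sqrt 2)) * (X - C (1 - Real.sqrt 2)) *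
      (X - C (-1 + Real.sqrt 2)) * (X - C (-1 - Real.sqrt 2)) := by
  refine ⟨by decide, det_A, charpoly_A, ?_⟩
  rw [← X_pow_four_sub_six_mul_X_sq_add_one_eq_prod (Real.sq_sqrt zero_le_two)]
  change (A.map (Int.castRingHom ℝ)).charpoly = _
  rw [charpoly_map, charpoly_A]
  simp
end

section
/- Let π be the group with presentation ⟨a₁,…,a₆, b₁,…,b₆ | a_{i+2} = a_i a_{i+1}, b_{i+2} = b_i b_{i+1}, a_i⁻¹ b_{i+1} a_{i+2} = b_i⁻¹ a_{i+1} b_{i+2}, for i = 1,…,6 with indices modulo 6⟩. Then the abelianization of π is isomorphic to (ℤ/4ℤ)⁴. -/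
/-- The generator `aᵢ` of the free group on `a₁,…,a₆,b₁,…,b₆` (indices modulo 6). -/
def a (i : Fin 6) : FreeGroup (Fin 6 ⊕ Fin 6) := FreeGroup.of (Sum.inl i)

/-- The generator `bᵢ` of the free group on `a₁,…,a₆,b₁,…,b₆` (indices modulo 6). -/
def b (i : Fin 6) : FreeGroup (Fin 6 ⊕ Fin 6) := FreeGroup.of (Sum.inr i)

/-- The relations `a_{i+2} = a_i a_{i+1}`, `b_{i+2} = b_i b_{i+1}`,
`a_i⁻¹ b_{i+1} a_{i+2} = b_i⁻¹ a_{i+1} b_{i+2}` for `i` modulo 6. -/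
def rels : Set (FreeGroup (Fin 6 ⊕ Fin 6)) :=
  (Set.range fun i : Fin 6 => (a i * a (i + 1)) * (a (i + 2))⁻¹) ∪
  (Set.range fun i : Fin 6 => (b i * b (i + 1)) * (b (i + 2))⁻¹) ∪
  (Set.range fun i : Fin 6 =>
    ((a i)⁻¹ * b (i + 1) * a (i + 2)) * ((b i)⁻¹ * a (i + 1) * b (i + 2))⁻¹)

/-- The fundamental group `π = π₁(F)` of the fiber. -/
def π : Type := PresentedGroup rels

noncomputable instance : Group π := by unfold π; infer_instance

/-!
In the abelianization the third family of relations follows from the first two, since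
`a_{i+2} - a_i = a_{i+1}` and `b_{i+2} - b_i = b_{i+1}`. What remains are two independent
Fibonacci sequences indexed by `ℤ/6`. Running the recurrence once around the cycle forces
`4 a₀ = 4 a₁ = 0`, so `a₀, a₁, b₀, b₁` span a `ℤ/4`-module containing every generator; sending
`aᵢ ↦ (F_{i-1}, F_i, 0, 0)` and `bᵢ ↦ (0, 0, F_{i-1}, F_i)` (Fibonacci numbers mod 4, which
have period 6) respects all relations and shows that these four elements are independent.
-/

section FibonacciModSix

variable {M : Type*} [AddCommGroup M]

def IsFibonacci (c : Fin 6 → M) : Prop := ∀ i, c (i + 2) = c i + c (i + 1)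

variable {c : Fin 6 → M}

theorem IsFibonacci.mem {S : AddSubgroup M} (hc : IsFibonacci c) (h0 : c 0 ∈ S) (h1 : c 1 ∈ S) :
    ∀ i, c i ∈ S := by
  have h2 : c 2 ∈ S := hc 0 ▸ add_mem h0 h1
  have h3 : c 3 ∈ S := hc 1 ▸ add_mem h1 h2
  have h4 : c 4 ∈ S := hc 2 ▸ add_mem h2 h3
  have h5 : c 5 ∈ S := hc 3 ▸ add_mem h3 h4
  intro i
  fin_cases i <;> assumption

theorem IsFibonacci.four_nsmul_eq_zero (hc : IsFibonacci c) (i : Fin 6) : 4 • c i = 0 := by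
  have h2 : c 2 = c 0 + c 1 := hc 0
  have h3 : c 3 = c 1 + c 2 := hc 1
  have h4 : c 4 = c 2 + c 3 := hc 2
  have h5 : c 5 = c 3 + c 4 := hc 3
  have h0 : c 0 = c 4 + c 5 := hc 4
  have h1 : c 1 = c 5 + c 0 := hc 5
  -- after eliminating `c 2, …, c 5` these read `4 c₀ + 8 c₁ = 0` and `4 c₀ + 4 c₁ = 0`
  have hc0 : c 0 ∈ AddSubgroup.torsionBy M 4 := AddSubgroup.torsionBy.nsmul_iff.mpr <| by
    linear_combination (norm := module) h0 - 2 • h1 - h5 - h3 - h2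
  have hc1 : c 1 ∈ AddSubgroup.torsionBy M 4 := AddSubgroup.torsionBy.nsmul_iff.mpr <| by
    linear_combination (norm := module) h1 - h0 - h4 - h3 - 2 • h2
  exact AddSubgroup.torsionBy.nsmul_iff.mp (hc.mem hc0 hc1 i)

end FibonacciModSix

theorem Abelianization.presentedGroup_additive_generated_by {α : Type*} {rels : Set (FreeGroup α)}
    {S : AddSubgroup (Additive (Abelianization (PresentedGroup rels)))}
    (h : ∀ s, Additive.ofMul (Abelianization.of (PresentedGroup.of s)) ∈ S)
    (x : Additive (Abelianization (PresentedGroup rels))) : x ∈ S := by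
  obtain ⟨y, rfl⟩ := Additive.ofMul.surjective x
  obtain ⟨z, rfl⟩ := QuotientGroup.mk'_surjective _ y
  obtain ⟨w, rfl⟩ := PresentedGroup.mk_surjective rels z
  induction w using FreeGroup.induction_on with
  | C1 => exact zero_mem S
  | of s => exact h s
  | inv_of s hs => exact neg_mem hs
  | mul u v hu hv => exact add_mem hu hv

def fibMod4 : Fin 6 → ZMod 4 := ![0, 1, 1, 2, 3, 1]

def genImage : Fin 6 ⊕ Fin 6 → (Fin 4 → ZMod 4) :=
  Sum.elim (fun i => ![fibMod4 (i - 1), fibMod4 i, 0, 0])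
    (fun i => ![0, 0, fibMod4 (i - 1), fibMod4 i])

theorem lift_genImage_eq_one_of_mem_rels :
    ∀ r ∈ rels, FreeGroup.lift (Multiplicative.ofAdd ∘ genImage) r = 1 := by
  rintro r ((⟨i, rfl⟩ | ⟨i, rfl⟩) | ⟨i, rfl⟩) <;>
    simp only [a, b, map_mul, map_inv, FreeGroup.lift_apply_of] <;>
    fin_cases i <;> decide

noncomputable def abelianizationToZMod : Additive (Abelianization π) →+ (Fin 4 → ZMod 4) :=
  MonoidHom.toAdditiveLeft <|
    Abelianization.lift (PresentedGroup.toGroup lift_genImage_eq_one_of_mem_rels)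

noncomputable def gen (s : Fin 6 ⊕ Fin 6) : Additive (Abelianization π) :=
  Additive.ofMul (Abelianization.of (PresentedGroup.of s))

theorem abelianizationToZMod_gen (s : Fin 6 ⊕ Fin 6) :
    abelianizationToZMod (gen s) = genImage s :=
  PresentedGroup.toGroup.of lift_genImage_eq_one_of_mem_rels

theorem gen_eq_add_of_mem_rels {s t u : Fin 6 ⊕ Fin 6}
    (h : FreeGroup.of s * FreeGroup.of t * (FreeGroup.of u)⁻¹ ∈ rels) : gen u = gen s + gen t := by
  have := congr(Additive.ofMul (Abelianization.of $(PresentedGroup.mk_eq_mk_of_mul_inv_mem h)))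
  simp only [map_mul] at this
  exact this.symm

theorem isFibonacci_gen_inl : IsFibonacci fun i => gen (.inl i) := fun i =>
  gen_eq_add_of_mem_rels (s := .inl i) (t := .inl (i + 1)) (u := .inl (i + 2))
    (Or.inl (Or.inl ⟨i, rfl⟩))

theorem isFibonacci_gen_inr : IsFibonacci fun i => gen (.inr i) := fun i =>
  gen_eq_add_of_mem_rels (s := .inr i) (t := .inr (i + 1)) (u := .inr (i + 2))
    (Or.inl (Or.inr ⟨i, rfl⟩))

theorem abelianization_four_nsmul_eq_zero (x : Additive (Abelianization π)) : 4 • x = 0 := by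
  refine AddSubgroup.torsionBy.nsmul_iff.mp
    (Abelianization.presentedGroup_additive_generated_by (fun s => ?_) x)
  rcases s with i | i
  · exact AddSubgroup.torsionBy.nsmul_iff.mpr (isFibonacci_gen_inl.four_nsmul_eq_zero i)
  · exact AddSubgroup.torsionBy.nsmul_iff.mpr (isFibonacci_gen_inr.four_nsmul_eq_zero i)

noncomputable instance : Module (ZMod 4) (Additive (Abelianization π)) :=
  AddCommGroup.zmodModule abelianization_four_nsmul_eq_zero

noncomputable def basisGen : Fin 4 → Additive (Abelianization π) :=
  ![gen (.inl 0), gen (.inl 1), gen (.inr 0), gen (.inr 1)]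

theorem linearIndependent_basisGen : LinearIndependent (ZMod 4) basisGen := by
  have h : abelianizationToZMod.toZModLinearMap 4 ∘ basisGen = Pi.basisFun (ZMod 4) (Fin 4) := by
    ext j : 1
    fin_cases j <;> simp [basisGen, abelianizationToZMod_gen] <;> decide
  exact LinearIndependent.of_comp _ (h ▸ (Pi.basisFun (ZMod 4) (Fin 4)).linearIndependent)

theorem span_basisGen : ⊤ ≤ Submodule.span (ZMod 4) (Set.range basisGen) := by
  intro x _
  refine Abelianization.presentedGroup_additive_generated_by
    (S := (Submodule.span (ZMod 4) (Set.range basisGen)).toAddSubgroup) (fun s => ?_) x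
  have mem (j : Fin 4) : basisGen j ∈ Submodule.span (ZMod 4) (Set.range basisGen) :=
    Submodule.subset_span ⟨j, rfl⟩
  rcases s with i | i
  · exact isFibonacci_gen_inl.mem (mem 0) (mem 1) i
  · exact isFibonacci_gen_inr.mem (mem 2) (mem 3) i

/-- The abelianization of `π₁(F)` is isomorphic to `(ℤ/4ℤ)⁴`. -/
theorem abelianization_pi1_fiber :
    Nonempty (Abelianization π ≃* Multiplicative (Fin 4 → ZMod 4)) :=
  ⟨AddEquiv.toMultiplicativeRight
    (Module.Basis.mk linearIndependent_basisGen span_basisGen).equivFun.toAddEquiv⟩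
end

section
/- For every θ ∈ [0, π/2], arccos( ( −(√5−1)·cos²θ − (2√5+4)·sin²θ ) / ( 4·√( cos²θ + ((3+√5)/2)²·sin²θ ) ) ) ≥ 3π/5. -/
open Real

/-- Length estimate for geodesic chords of type (e) and (f): for every `θ ∈ [0, π/2]`,
`arccos((−(√5−1)cos²θ − (2√5+4)sin²θ) / (4√(cos²θ + ((3+√5)/2)²sin²θ))) ≥ 3π/5`. -/
theorem chord_length_estimate_ef (θ : ℝ) (hθ : θ ∈ Set.Icc 0 (π / 2)) :
    arccos ((-(sqrt 5 - 1) * cos θ ^ 2 - (2 * sqrt 5 + 4) * sin θ ^ 2) /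
        (4 * sqrt (cos θ ^ 2 + ((3 + sqrt 5) / 2) ^ 2 * sin θ ^ 2)))
      ≥ 3 * π / 5 := by
  have hs5sq : sqrt 5 ^ 2 = 5 := Real.sq_sqrt (by norm_num)
  have hs52 : 2 ≤ sqrt 5 := by nlinarith [Real.sqrt_nonneg 5]
  have hs53 : sqrt 5 ≤ 3 := by nlinarith [Real.sqrt_nonneg 5]
  set t := sin θ ^ 2 with ht
  have htc : cos θ ^ 2 = 1 - t := by
    have := sin_sq_add_cos_sq θ; linarith
  have ht0 : (0:ℝ) ≤ t := sq_nonneg _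
  have ht1 : t ≤ 1 := sin_sq_le_one θ
  have hinner : cos θ ^ 2 + ((3 + sqrt 5) / 2) ^ 2 * sin θ ^ 2
      = 1 + (5 + 3 * sqrt 5) / 2 * t := by
    rw [htc, ← ht]; linear_combination (t / 4) * hs5sq
  set r := sqrt (cos θ ^ 2 + ((3 + sqrt 5) / 2) ^ 2 * sin θ ^ 2) with hr
  have hinner_nonneg : (0:ℝ) ≤ 1 + (5 + 3 * sqrt 5) / 2 * t := by nlinarith
  have hr2 : r ^ 2 = 1 + (5 + 3 * sqrt 5) / 2 * t := by
    rw [hr, hinner]; exact Real.sq_sqrt hinner_nonneg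
  have hr0 : 0 ≤ r := Real.sqrt_nonneg _
  have hr1 : 1 ≤ r := by nlinarith
  have hrpos : 0 < 4 * r := by linarith
  -- key inequality: the fraction is at most (1 - √5)/4
  have hkey : (-(sqrt 5 - 1) * cos θ ^ 2 - (2 * sqrt 5 + 4) * sin θ ^ 2) / (4 * r)
      ≤ (1 - sqrt 5) / 4 := by
    rw [div_le_iff₀ hrpos]
    have hA : (0:ℝ) ≤ (sqrt 5 - 1) * r := by nlinarith
    have hB : (0:ℝ) ≤ (sqrt 5 - 1) + (sqrt 5 + 5) * t := by nlinarith
    have hsq : ((sqrt 5 - 1) * r) ^ 2 ≤ ((sqrt 5 - 1) + (sqrt 5 + 5) * t) ^ 2 := by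
      nlinarith [sq_nonneg t, mul_nonneg ht0 ht0]
    have hAB : (sqrt 5 - 1) * r ≤ (sqrt 5 - 1) + (sqrt 5 + 5) * t :=
      le_of_pow_le_pow_left₀ two_ne_zero hB hsq
    rw [htc, ← ht]
    nlinarith
  -- arccos of (1 - √5)/4 equals 3π/5
  have hcos : cos (3 * π / 5) = (1 - sqrt 5) / 4 := by
    have h1 : (3:ℝ) * π / 5 = π - 2 * (π / 5) := by ring
    rw [h1, Real.cos_pi_sub, Real.cos_two_mul, Real.cos_pi_div_five]
    linear_combination (-(1:ℝ)/8) * hs5sq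
  have harc : arccos ((1 - sqrt 5) / 4) = 3 * π / 5 := by
    rw [← hcos]
    exact Real.arccos_cos (by linarith [pi_pos]) (by linarith [pi_pos])
  calc arccos ((-(sqrt 5 - 1) * cos θ ^ 2 - (2 * sqrt 5 + 4) * sin θ ^ 2) / (4 * r))
      ≥ arccos ((1 - sqrt 5) / 4) := by
        unfold Real.arccos
        have := Real.monotone_arcsin hkey
        linarith
    _ = 3 * π / 5 := harc
end

section
/- For every t ∈ [0,1], arccos( √( (3−√5)/8 + (√5/4)·t² ) ) + arccos( −((√5−1)/4)·t ) ≥ 4π/5. -/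
set_option maxHeartbeats 1000000


open Real


private lemma core_ineq (t s5 s w : ℝ) (ht0 : 0 ≤ t) (ht1 : t ≤ 1)
    (hs5 : s5 ^ 2 = 5) (hs5lb : 2 ≤ s5) (hs5ub : s5 ≤ 3)
    (hs0 : 0 ≤ s) (hs2 : s ^ 2 = (5 - s5) / 8)
    (hw0 : 0 ≤ w) (hw2 : w ^ 2 = 1 - (3 - s5) / 8 * t ^ 2) :
    (3 - s5) / 8 + s5 / 4 * t ^ 2 ≤ (t / 4 + s * w) ^ 2 := by
  have hP0 : 0 ≤ t / 2 * (s * w) := by positivity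
  have hred : (2 + s5) / 8 * t ^ 2 - 1 / 4 ≤ t / 2 * (s * w) := by
    rcases le_or_gt ((2 + s5) * t ^ 2) 2 with hc | hc
    · nlinarith
    · have hL0 : 0 < (2 + s5) / 8 * t ^ 2 - 1 / 4 := by nlinarith
      have hsq : ((2 + s5) / 8 * t ^ 2 - 1 / 4) ^ 2 ≤ (t / 2 * (s * w)) ^ 2 := by
        have hexp : (t / 2 * (s * w)) ^ 2 = t ^ 2 / 4 * ((5 - s5) / 8) *
            (1 - (3 - s5) / 8 * t ^ 2) := by
          rw [mul_pow, mul_pow, hs2, hw2]; ring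
        rw [hexp]
        nlinarith [mul_nonneg (by nlinarith : (0:ℝ) ≤ 1 - t ^ 2)
          (by nlinarith : (0:ℝ) ≤ (14 + 2 * s5) * t ^ 2 - 4), hs5]
      nlinarith
  nlinarith [hs2, hw2]

private lemma arccos_anti {x y : ℝ} (h : x ≤ y) : arccos y ≤ arccos x := by
  rw [Real.arccos_eq_pi_div_two_sub_arcsin, Real.arccos_eq_pi_div_two_sub_arcsin]
  exact sub_le_sub_left (Real.monotone_arcsin h) _

/-- Length estimate for geodesic multichords of types (b),(d) inducing opposite orientations:
for every `t ∈ [0,1]`,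
`arccos(√((3−√5)/8 + (√5/4)t²)) + arccos(−((√5−1)/4)t) ≥ 4π/5`. -/
theorem multichord_length_estimate_bd (t : ℝ) (ht : t ∈ Set.Icc (0 : ℝ) 1) :
    arccos (sqrt ((3 - sqrt 5) / 8 + sqrt 5 / 4 * t ^ 2)) +
      arccos (-((sqrt 5 - 1) / 4) * t) ≥ 4 * π / 5 := by
  obtain ⟨ht0, ht1⟩ := ht
  set s5 : ℝ := sqrt 5 with hs5def
  have hs5nn : (0:ℝ) ≤ s5 := Real.sqrt_nonneg 5
  have hs5 : s5 ^ 2 = 5 := Real.sq_sqrt (by norm_num)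
  have hs5lb : (2:ℝ) ≤ s5 := by nlinarith
  have hs5ub : s5 ≤ 3 := by nlinarith
  set v : ℝ := -((s5 - 1) / 4) * t with hvdef
  have hv1 : -1 ≤ v := by nlinarith
  have hv2 : v ≤ 1 := by nlinarith
  set A : ℝ := arccos v with hAdef
  have hcosA : cos A = v := Real.cos_arccos hv1 hv2
  have hsinA : sin A = sqrt (1 - v ^ 2) := Real.sin_arccos v
  -- sin(π/5)
  set s : ℝ := sin (π / 5) with hsdef
  have hs0 : 0 ≤ s := Real.sin_nonneg_of_nonneg_of_le_pi (by positivity)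
    (by linarith [Real.pi_pos])
  have hs2 : s ^ 2 = (5 - s5) / 8 := by
    have := Real.sin_sq_add_cos_sq (π / 5)
    rw [Real.cos_pi_div_five] at this
    nlinarith
  -- cos and sin of 4π/5
  have hcos45 : cos (4 * π / 5) = -((1 + s5) / 4) := by
    have : (4 : ℝ) * π / 5 = π - π / 5 := by ring
    rw [this, Real.cos_pi_sub, Real.cos_pi_div_five]
  have hsin45 : sin (4 * π / 5) = s := by
    have : (4 : ℝ) * π / 5 = π - π / 5 := by ring
    rw [this, Real.sin_pi_sub]
  -- w := sin A
  set w : ℝ := sqrt (1 - v ^ 2) with hwdef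
  have hw0 : 0 ≤ w := Real.sqrt_nonneg _
  have hw2 : w ^ 2 = 1 - v ^ 2 := Real.sq_sqrt (by nlinarith)
  -- A ≤ 4π/5
  have hA45 : A ≤ 4 * π / 5 := by
    have h1 : cos (4 * π / 5) ≤ v := by rw [hcos45]; nlinarith
    calc A ≤ arccos (cos (4 * π / 5)) := arccos_anti h1
      _ = 4 * π / 5 := Real.arccos_cos (by positivity) (by linarith [Real.pi_pos])
  -- the key inequality
  set u : ℝ := sqrt ((3 - s5) / 8 + s5 / 4 * t ^ 2) with hudef
  have hkey : u ≤ cos (4 * π / 5 - A) := by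
    rw [Real.cos_sub, hcos45, hsin45, hcosA, hsinA]
    have hR : -((1 + s5) / 4) * v + s * w = t / 4 + s * w := by
      rw [hvdef]; nlinarith
    rw [hR]
    have hRnn : 0 ≤ t / 4 + s * w := by positivity
    have hv2' : v ^ 2 = (3 - s5) / 8 * t ^ 2 := by
      rw [hvdef]; linear_combination (t ^ 2 / 16) * hs5
    have hmain : (3 - s5) / 8 + s5 / 4 * t ^ 2 ≤ (t / 4 + s * w) ^ 2 :=
      core_ineq t s5 s w ht0 ht1 hs5 hs5lb hs5ub hs0 hs2 hw0 (by rw [hw2, hv2'])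
    calc u ≤ sqrt ((t / 4 + s * w) ^ 2) := Real.sqrt_le_sqrt hmain
      _ = t / 4 + s * w := Real.sqrt_sq hRnn
  -- conclude
  have hu1 : -1 ≤ u := le_trans (by norm_num) (Real.sqrt_nonneg _)
  have hfinal : 4 * π / 5 - A ≤ arccos u := by
    calc 4 * π / 5 - A = arccos (cos (4 * π / 5 - A)) := by
          rw [Real.arccos_cos (by linarith) (by linarith [Real.pi_pos, Real.arccos_nonneg v])]
      _ ≤ arccos u := arccos_anti hkey
  linarith
end
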